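/- With the extension setup below, where V = K regarded as a 1-dimensional right vector space over itself (so ρ := π : S → (K,+)), assume that the metric subspace (T′, d|_{T′×T′}) satisfies (MC′). Then ρ maps c-balls of (S,d) surjectively onto c-balls of (K, d_K): for every z ∈ S and r > 0 there exist z′ ∈ K and r′ > 0 with ρ({x ∈ S : d(z,x) ≤ r}) = {y ∈ K : d_K(z′,y) ≤ r′}. -/
import Mathlib


/-- `2 ^ (-a)` for `a ∈ ℝ ∪ {∞}`, with the convention `2 ^ (-∞) = 0`. -/
noncomputable def toDist (a : WithTop ℝ) : ℝ :=
  WithTop.recTopCoe 0 (fun r : ℝ => (2 : ℝ) ^ (-r)) a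

/-- Property (MC′) for a distance function `d` on `X`: every nested sequence of c-balls
(closed balls of positive radius) has nonempty intersection. -/
def MCprime {X : Type*} (d : X → X → ℝ) : Prop :=
  ∀ (c : ℕ → X) (r : ℕ → ℝ),
    (∀ n, 0 < r n) →
    (∀ n, {y | d (c (n + 1)) y ≤ r (n + 1)} ⊆ {y | d (c n) y ≤ r n}) →
    (⋂ n, {y | d (c n) y ≤ r n}).Nonempty

/-- Property (MC′) for the metric subspace on `A ⊆ X` induced by `d`. -/
def MCprimeOn {X : Type*} (d : X → X → ℝ) (A : Set X) : Prop :=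
  ∀ (c : ℕ → X) (r : ℕ → ℝ),
    (∀ n, c n ∈ A) → (∀ n, 0 < r n) →
    (∀ n, {y ∈ A | d (c (n + 1)) y ≤ r (n + 1)} ⊆ {y ∈ A | d (c n) y ≤ r n}) →
    (⋂ n, {y ∈ A | d (c n) y ≤ r n}).Nonempty

lemma toDist_top' : toDist (⊤ : WithTop ℝ) = 0 := rfl
lemma toDist_coe' (b : ℝ) : toDist (b : WithTop ℝ) = (2:ℝ) ^ (-b) := rfl

lemma toDist_le_rpow (a : WithTop ℝ) (s : ℝ) :
    toDist a ≤ (2:ℝ) ^ (-s) ↔ (s : WithTop ℝ) ≤ a := by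
  cases a with
  | top =>
      simp only [toDist_top', le_top, iff_true]
      positivity
  | coe b =>
      rw [toDist_coe', Real.rpow_le_rpow_left_iff (by norm_num : (1:ℝ) < 2),
        neg_le_neg_iff, WithTop.coe_le_coe]

lemma dominate {K S : Type*} [DivisionRing K] [AddGroup S]
    (π : S →+ K)
    (ω : S → WithTop ℝ)
    (hω1 : ∀ x : S, ω x = ⊤ ↔ x = 0)
    (hω3neg : ∀ x : S, ω (-x) = ω x)
    (hω3 : ∀ x y : S, min (ω x) (ω y) ≤ ω (x + y))
    (hMC : MCprimeOn (fun x y : S => toDist (ω (x + -y))) {x : S | π x = 0})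
    (u : ℕ → S) (hu : ∀ n, π (u n) = 1) (hmono : ∀ n, ω (u n) ≤ ω (u (n + 1))) :
    ∃ w : S, π w = 1 ∧ ∀ n, ω (u n) ≤ ω w := by
  have hmin : ∀ {x y : S} {b : WithTop ℝ}, b ≤ ω x → b ≤ ω y → b ≤ ω (x + y) :=
    fun hx hy => le_trans (le_min hx hy) (hω3 _ _)
  have hne : ∀ n, ω (u n) ≠ ⊤ := by
    intro n h
    have h2 := hu n
    rw [(hω1 _).1 h, map_zero] at h2
    exact one_ne_zero h2.symm
  choose a ha using fun n => WithTop.ne_top_iff_exists.mp (hne n)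
  have hcA : ∀ n, (u n + -(u 0)) ∈ {x : S | π x = 0} := by
    intro n
    simp only [Set.mem_setOf_eq, map_add, map_neg, hu, add_neg_cancel]
  have hrpos : ∀ n, (0:ℝ) < (2:ℝ) ^ (-(a n)) := fun n => Real.rpow_pos_of_pos two_pos _
  have hnest : ∀ n, {y ∈ {x : S | π x = 0} |
        toDist (ω ((u (n+1) + -(u 0)) + -y)) ≤ (2:ℝ) ^ (-(a (n+1)))} ⊆
      {y ∈ {x : S | π x = 0} | toDist (ω ((u n + -(u 0)) + -y)) ≤ (2:ℝ) ^ (-(a n))} := by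
    intro n y hy
    obtain ⟨hyA, hyd⟩ := hy
    refine ⟨hyA, ?_⟩
    rw [toDist_le_rpow] at hyd ⊢
    have hdecomp : u n + -(u 0) + -y = (u n + -(u (n+1))) + (u (n+1) + -(u 0) + -y) := by
      simp only [add_assoc, neg_add_cancel_left]
    rw [hdecomp]
    refine hmin (hmin (ha n).le ?_) ?_
    · rw [hω3neg]
      exact (ha n).le.trans (hmono n)
    · have h1 : ((a n : WithTop ℝ)) ≤ (a (n+1) : WithTop ℝ) := by
        rw [ha n, ha (n+1)]; exact hmono n
      exact h1.trans hyd
  obtain ⟨x, hx⟩ := hMC (fun n => u n + -(u 0)) (fun n => (2:ℝ) ^ (-(a n))) hcA hrpos hnest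
  simp only [Set.mem_iInter] at hx
  refine ⟨x + u 0, ?_, ?_⟩
  · rw [map_add, (hx 0).1, hu 0, zero_add]
  · intro n
    have hd := (hx n).2
    rw [toDist_le_rpow] at hd
    have e1 : -(u n + -(u 0) + -x) = x + u 0 + -(u n) := by
      simp only [neg_add_rev, neg_neg, add_assoc]
    have h2 : (a n : WithTop ℝ) ≤ ω (x + u 0 + -(u n)) := by
      rw [← e1, hω3neg]; exact hd
    calc ω (u n) = (a n : WithTop ℝ) := (ha n).symm
      _ ≤ ω ((x + u 0 + -(u n)) + u n) := hmin h2 (ha n).le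
      _ = ω (x + u 0) := by rw [neg_add_cancel_right]

lemma exists_max {K S : Type*} [DivisionRing K] [AddGroup S]
    (π : S →+ K) (hπ : Function.Surjective π)
    (ω : S → WithTop ℝ)
    (hω1 : ∀ x : S, ω x = ⊤ ↔ x = 0)
    (hω3neg : ∀ x : S, ω (-x) = ω x)
    (hω3 : ∀ x y : S, min (ω x) (ω y) ≤ ω (x + y))
    (hMC : MCprimeOn (fun x y : S => toDist (ω (x + -y))) {x : S | π x = 0}) :
    ∃ e : S, π e = 1 ∧ ∀ v : S, π v = 1 → ω v ≤ ω e := by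
  obtain ⟨e₀, he₀⟩ := hπ 1
  have hfne : ∀ v : S, π v = 1 → ω v ≠ ⊤ := by
    intro v hv h
    rw [(hω1 _).1 h, map_zero] at hv
    exact one_ne_zero hv.symm
  have seq : ∀ τ : ℕ → ℝ, (∀ n, ∃ v, π v = 1 ∧ (τ n : WithTop ℝ) ≤ ω v) →
      ∃ w, π w = 1 ∧ ∀ n, (τ n : WithTop ℝ) ≤ ω w := by
    intro τ hτ
    have step : ∀ (n : ℕ) (w : S), ∃ v, π w = 1 →
        (π v = 1 ∧ ω w ≤ ω v ∧ (τ n : WithTop ℝ) ≤ ω v) := by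
      intro n w
      obtain ⟨v, hv1, hv2⟩ := hτ n
      rcases le_total (ω w) (ω v) with h | h
      · exact ⟨v, fun _ => ⟨hv1, h, hv2⟩⟩
      · exact ⟨w, fun hw => ⟨hw, le_refl _, hv2.trans h⟩⟩
    choose F hF using step
    obtain ⟨u, hu0, hurec⟩ : ∃ u : ℕ → S, u 0 = e₀ ∧ ∀ n, u (n+1) = F n (u n) :=
      ⟨fun n => Nat.rec e₀ (fun n w => F n w) n, rfl, fun n => rfl⟩
    have hu1 : ∀ n, π (u n) = 1 := by
      intro n
      induction n with
      | zero => rw [hu0]; exact he₀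
      | succ n ih => rw [hurec n]; exact (hF n (u n) ih).1
    have hmono : ∀ n, ω (u n) ≤ ω (u (n+1)) := fun n => by
      rw [hurec n]; exact (hF n (u n) (hu1 n)).2.1
    obtain ⟨w, hw1, hw2⟩ := dominate π ω hω1 hω3neg hω3 hMC u hu1 hmono
    refine ⟨w, hw1, fun n => le_trans ?_ (hw2 (n+1))⟩
    rw [hurec n]; exact (hF n (u n) (hu1 n)).2.2
  set R := {a : ℝ | ∃ v, π v = 1 ∧ ω v = (a : WithTop ℝ)} with hR
  have hRne : R.Nonempty := by
    obtain ⟨a, ha⟩ := WithTop.ne_top_iff_exists.mp (hfne e₀ he₀)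
    exact ⟨a, e₀, he₀, ha.symm⟩
  by_cases hbdd : BddAbove R
  · have hτ : ∀ n : ℕ, ∃ v, π v = 1 ∧ ((sSup R - 1/(n+1) : ℝ) : WithTop ℝ) ≤ ω v := by
      intro n
      have hlt : sSup R - 1/(n+1) < sSup R := by
        have : (0:ℝ) < 1/(n+1) := by positivity
        linarith
      obtain ⟨a, haR, hlt2⟩ := exists_lt_of_lt_csSup hRne hlt
      obtain ⟨v, hv1, hv2⟩ := haR
      exact ⟨v, hv1, by rw [hv2]; exact_mod_cast hlt2.le⟩
    obtain ⟨w, hw1, hw2⟩ := seq _ hτ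
    obtain ⟨b, hb⟩ := WithTop.ne_top_iff_exists.mp (hfne w hw1)
    have hσb : sSup R ≤ b := by
      by_contra hc
      push_neg at hc
      obtain ⟨n, hn⟩ := exists_nat_one_div_lt (show (0:ℝ) < sSup R - b by linarith)
      have h2 := hw2 n
      rw [← hb, WithTop.coe_le_coe] at h2
      have : (1:ℝ)/(n+1) < sSup R - b := hn
      linarith
    refine ⟨w, hw1, fun v hv => ?_⟩
    obtain ⟨av, hav⟩ := WithTop.ne_top_iff_exists.mp (hfne v hv)
    rw [← hav, ← hb, WithTop.coe_le_coe]
    exact le_trans (le_csSup hbdd ⟨v, hv, hav.symm⟩) hσb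
  · exfalso
    rw [not_bddAbove_iff] at hbdd
    have hτ : ∀ n : ℕ, ∃ v, π v = 1 ∧ ((n : ℝ) : WithTop ℝ) ≤ ω v := by
      intro n
      obtain ⟨a, haR, hlt⟩ := hbdd n
      obtain ⟨v, hv1, hv2⟩ := haR
      exact ⟨v, hv1, by rw [hv2]; exact_mod_cast hlt.le⟩
    obtain ⟨w, hw1, hw2⟩ := seq _ hτ
    obtain ⟨b, hb⟩ := WithTop.ne_top_iff_exists.mp (hfne w hw1)
    obtain ⟨n, hn⟩ := exists_nat_gt b
    have h2 := hw2 n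
    rw [← hb, WithTop.coe_le_coe] at h2
    linarith

theorem image_cball_eq_cball' {K S : Type*} [DivisionRing K] [AddGroup S]
    (ν : K → WithTop ℝ)
    (hν1 : ∀ x : K, ν x = ⊤ ↔ x = 0)
    (hνmul : ∀ x y : K, ν (x * y) = ν x + ν y)
    (π : S →+ K) (hπ : Function.Surjective π)
    (smul : S → K → S)
    (hs1 : ∀ (x : S) (l : K), π (smul x l) = π x * l)
    (m : ℝ) (hm : 0 < m)
    (ω : S → WithTop ℝ)
    (hω1 : ∀ x : S, ω x = ⊤ ↔ x = 0)
    (hω2 : ∀ (x : S) (l : K), ω (smul x l) = ω x + (m : WithTop ℝ) * ν l)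
    (hω3neg : ∀ x : S, ω (-x) = ω x)
    (hω3 : ∀ x y : S, min (ω x) (ω y) ≤ ω (x + y))
    (hMC : MCprimeOn (fun x y : S => toDist (ω (x + -y))) {x : S | π x = 0}) :
    ∀ (z : S) (r : ℝ), 0 < r →
      ∃ (z' : K) (r' : ℝ), 0 < r' ∧
        π '' {x : S | toDist (ω (z + -x)) ≤ r} = {y : K | toDist (ν (z' - y)) ≤ r'} := by
  -- valuation facts
  have hν_one : ν (1:K) = ((0:ℝ) : WithTop ℝ) := by
    have h1 : ν (1:K) ≠ ⊤ := fun h => one_ne_zero ((hν1 1).1 h)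
    obtain ⟨n1, hn1⟩ := WithTop.ne_top_iff_exists.mp h1
    have h11 := hνmul 1 1
    rw [one_mul, ← hn1, ← WithTop.coe_add] at h11
    have : n1 = n1 + n1 := WithTop.coe_injective h11
    have hn0 : n1 = 0 := by linarith
    rw [← hn1, hn0]
  have hνinv : ∀ (k : K) (a : ℝ), k ≠ 0 → ν k = (a : WithTop ℝ) →
      ν k⁻¹ = ((-a : ℝ) : WithTop ℝ) := by
    intro k a hk hka
    have hkinv : k⁻¹ ≠ 0 := inv_ne_zero hk
    obtain ⟨b, hb⟩ := WithTop.ne_top_iff_exists.mp (fun h => hkinv ((hν1 _).1 h))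
    have h := hνmul k k⁻¹
    rw [mul_inv_cancel₀ hk, hν_one, hka, ← hb, ← WithTop.coe_add] at h
    have hab : (0:ℝ) = a + b := WithTop.coe_injective h
    rw [← hb]
    congr 1
    linarith
  obtain ⟨e, he1, he2⟩ := exists_max π hπ ω hω1 hω3neg hω3 hMC
  have heT : ω e ≠ ⊤ := by
    intro h
    have := he1
    rw [(hω1 _).1 h, map_zero] at this
    exact one_ne_zero this.symm
  obtain ⟨M, hM⟩ := WithTop.ne_top_iff_exists.mp heT
  intro z r hr
  set s : ℝ := -Real.logb 2 r with hs
  have hrs : (2:ℝ) ^ (-s) = r := by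
    rw [hs, neg_neg]
    exact Real.rpow_logb two_pos (by norm_num) hr
  set t : ℝ := (s - M)/m with ht
  have hmt : m * t = s - M := by
    rw [ht]; field_simp
  refine ⟨π z, (2:ℝ)^(-t), Real.rpow_pos_of_pos two_pos _, ?_⟩
  ext y
  simp only [Set.mem_image, Set.mem_setOf_eq]
  constructor
  · rintro ⟨x, hx, rfl⟩
    rw [← hrs, toDist_le_rpow] at hx
    rw [toDist_le_rpow]
    have hk : π z - π x = π (z + -x) := by rw [map_add, map_neg, sub_eq_add_neg]
    rw [hk]
    by_cases h0 : π (z + -x) = 0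
    · rw [(hν1 _).2 h0]; exact le_top
    · obtain ⟨a, ha⟩ := WithTop.ne_top_iff_exists.mp (fun h => h0 ((hν1 _).1 h))
      have hzx0 : z + -x ≠ 0 := fun h => h0 (by rw [h, map_zero])
      obtain ⟨c, hc⟩ := WithTop.ne_top_iff_exists.mp (fun h => hzx0 ((hω1 _).1 h))
      have hv1 : π (smul (z + -x) (π (z + -x))⁻¹) = 1 := by
        rw [hs1, mul_inv_cancel₀ h0]
      have hv2 := he2 _ hv1
      rw [hω2, hνinv _ a h0 ha.symm, ← hc, ← hM, ← WithTop.coe_mul, ← WithTop.coe_add,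
        WithTop.coe_le_coe] at hv2
      have hsc : s ≤ c := by rw [← hc, WithTop.coe_le_coe] at hx; exact hx
      rw [← ha, WithTop.coe_le_coe]
      rw [mul_neg] at hv2
      -- hv2 : c + -(m * a) ≤ M, hsc : s ≤ c, want : t ≤ a
      nlinarith [hmt, hv2, hsc, mul_le_mul_of_nonneg_left (le_refl a) hm.le]
  · intro hy
    rw [toDist_le_rpow] at hy
    by_cases h0 : π z - y = 0
    · refine ⟨z, ?_, sub_eq_zero.mp h0⟩
      rw [add_neg_cancel, (hω1 0).2 rfl, toDist_top']
      exact hr.le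
    · obtain ⟨a, ha⟩ := WithTop.ne_top_iff_exists.mp (fun h => h0 ((hν1 _).1 h))
      have hta : t ≤ a := by rw [← ha, WithTop.coe_le_coe] at hy; exact hy
      refine ⟨-(smul e (π z - y)) + z, ?_, ?_⟩
      · have hzx : z + -(-(smul e (π z - y)) + z) = smul e (π z - y) := by
          rw [neg_add_rev, neg_neg, add_neg_cancel_left]
        rw [hzx, ← hrs, toDist_le_rpow, hω2, ← hM, ← ha, ← WithTop.coe_mul,
          ← WithTop.coe_add, WithTop.coe_le_coe]
        nlinarith [hmt, mul_le_mul_of_nonneg_left hta hm.le]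
      · rw [map_add, map_neg, hs1, he1, one_mul, neg_sub, sub_add_cancel]

/-- In the extension setup with `V = K` regarded as a 1-dimensional right
vector space over itself (so `ρ := π : S → (K,+)`), if `K` is a skew field with a spherically
complete valuation `ν` and the metric subspace `(T′, d|_{T′×T′})` on the kernel
`T′ = {x | π x = 0}` satisfies (MC′), then `ρ` maps c-balls of `(S, d)` surjectively onto
c-balls of `(K, d_K)`. -/
theorem image_cball_eq_cball {K S : Type*} [DivisionRing K] [AddGroup S]
    (ν : K → WithTop ℝ)
    (hν1 : ∀ x : K, ν x = ⊤ ↔ x = 0)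
    (hνmul : ∀ x y : K, ν (x * y) = ν x + ν y)
    (hνadd : ∀ x y : K, min (ν x) (ν y) ≤ ν (x + y))
    (hνsph : MCprime (fun x y : K => toDist (ν (x - y))))
    (π : S →+ K) (hπ : Function.Surjective π)
    (smul : S → K → S)
    (hs1 : ∀ (x : S) (l : K), π (smul x l) = π x * l)
    (hs2 : ∀ (x y : S) (l : K), smul (x + y) l = smul x l + smul y l)
    (hs3 : ∀ (x : S) (k l : K), smul (smul x k) l = smul x (k * l))
    (hs4 : ∀ x : S, smul x 1 = x)
    (m : ℝ) (hm : 0 < m)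
    (ω : S → WithTop ℝ)
    (hω1 : ∀ x : S, ω x = ⊤ ↔ x = 0)
    (hω2 : ∀ (x : S) (l : K), ω (smul x l) = ω x + (m : WithTop ℝ) * ν l)
    (hω3neg : ∀ x : S, ω (-x) = ω x)
    (hω3 : ∀ x y : S, min (ω x) (ω y) ≤ ω (x + y))
    (hMC : MCprimeOn (fun x y : S => toDist (ω (x + -y))) {x : S | π x = 0}) :
    ∀ (z : S) (r : ℝ), 0 < r →
      ∃ (z' : K) (r' : ℝ), 0 < r' ∧
        π '' {x : S | toDist (ω (z + -x)) ≤ r} = {y : K | toDist (ν (z' - y)) ≤ r'} := by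
  exact image_cball_eq_cball' ν hν1 hνmul π hπ smul hs1 m hm ω hω1 hω2 hω3neg hω3 hMC
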